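/- Let (P, ≤) be a preorder such that every upward closed set is a finite union of cones. For any monotone map Pre from subsets of P to subsets of P (monotone w.r.t. inclusion) that maps upward closed sets to upward closed sets, and any upward closed set γ, the sequence B_n = γ ∪ Pre(B_{n-1}) with B_0 = γ stabilizes: there exists n with B_{n+1} = B_n. -/
import Mathlib


/-- Let `(P, ≤)` be a preorder in which every upward closed set is a finite union of
cones.  For any monotone map `Pre` on subsets of `P` that maps upward closed sets to
upward closed sets, and any upward closed `γ`, the sequence `B 0 = γ`,
`B (n+1) = γ ∪ Pre (B n)` stabilizes. -/
theorem backward_iteration_stabilizes {P : Type*} [Preorder P]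
    (hfin : ∀ U : Set P, IsUpperSet U →
      ∃ G : Finset P, U = ⋃ g ∈ G, {q : P | g ≤ q})
    (Pre : Set P → Set P)
    (hmono : ∀ X Y : Set P, X ⊆ Y → Pre X ⊆ Pre Y)
    (hupper : ∀ X : Set P, IsUpperSet X → IsUpperSet (Pre X))
    (γ : Set P) (hγ : IsUpperSet γ)
    (B : ℕ → Set P) (hB0 : B 0 = γ)
    (hBs : ∀ n, B (n + 1) = γ ∪ Pre (B n)) :
    ∃ n, B (n + 1) = B n := by
  -- monotonicity of B
  have hstep : ∀ n, B n ⊆ B (n + 1) := by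
    intro n
    induction n with
    | zero => rw [hB0, hBs]; exact Set.subset_union_left
    | succ n ih =>
      rw [hBs, hBs (n + 1)]
      exact Set.union_subset_union_right _ (hmono _ _ ih)
  have hmonoB : ∀ m n, m ≤ n → B m ⊆ B n := by
    intro m n h
    induction h with
    | refl => exact subset_rfl
    | step h ih => exact ih.trans (hstep _)
  -- each B n is an upper set
  have hup : ∀ n, IsUpperSet (B n) := by
    intro n
    induction n with
    | zero => rw [hB0]; exact hγ
    | succ n ih => rw [hBs]; exact hγ.union (hupper _ ih)
  -- union is upper
  have hU : IsUpperSet (⋃ n, B n) := isUpperSet_iUnion fun n => hup n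
  obtain ⟨G, hG⟩ := hfin _ hU
  -- each generator lies in some B n
  have hg : ∀ g ∈ G, ∃ n, g ∈ B n := by
    intro g hgG
    have : g ∈ ⋃ n, B n := by
      rw [hG]
      exact Set.mem_biUnion hgG le_rfl
    simpa using this
  choose f hf using hg
  -- take N as max
  obtain ⟨N, hN⟩ : ∃ N, ∀ g (h : g ∈ G), f g h ≤ N := by
    classical
    refine ⟨G.attach.sup fun x => f x.1 x.2, fun g h => ?_⟩
    exact Finset.le_sup (f := fun x : {x // x ∈ G} => f x.1 x.2) (Finset.mem_attach _ ⟨g, h⟩)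
  have hUN : (⋃ n, B n) ⊆ B N := by
    rw [hG]
    intro x hx
    simp only [Set.mem_iUnion] at hx
    obtain ⟨g, hgG, hgx⟩ := hx
    exact hup N (hgx) (hmonoB _ _ (hN g hgG) (hf g hgG))
  refine ⟨N, Set.Subset.antisymm ?_ (hstep N)⟩
  exact (Set.subset_iUnion B (N + 1)).trans hUN
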